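/- arXiv:2503.00220 — 3 statements merged into one kernel-verified Lean document; each statement's English description precedes it below -/
import Mathlib

section
/- Assume the scores S_1, …, S_n are distinct with probability 1. Then for any γ > 0, with probability at least 1 − 2·exp(−2nγ²) over the draw of the sample, 1 − α − γ ≤ P(Y_{n+1} ∈ Ĉ_n(X_{n+1}) | P_n) ≤ 1 − α + 1/n + γ. -/
open MeasureTheory

/-- The empirical `(1-α)`-quantile of the scores `S 1, …, S n`. -/
noncomputable def empQuant {n : ℕ} (α : ℝ) (S : Fin n → ℝ) : ℝ :=
  sInf {t : ℝ | 1 - α ≤ ((Finset.univ.filter fun i => S i ≤ t).card : ℝ) / n}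

/-!
`τ̂_n` is the `(1-α)`-quantile of the empirical distribution of the scores, so at least
`n(1-α)` scores lie at or below it and, when the scores are distinct, at most `n(1-α) + 1`.
If `F(τ̂_n) < 1-α-γ`, all of the former lie below the `(1-α-γ)`-quantile of `S`, a set of
probability at most `1-α-γ`. If `F(τ̂_n) > 1-α+1/n+γ`, at least `nα-1` scores lie above the
`(1-α+1/n+γ)`-quantile `q`; as ties have probability zero, `S` has no atoms, so `F q` is exactly
`1-α+1/n+γ`. In both cases a binomial count exceeds its mean by `nγ`, which by Hoeffding's
inequality has probability at most `exp(-2nγ²)`.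
-/

open ProbabilityTheory Filter Set Topology
open scoped ENNReal Finset

namespace ProbabilityTheory

noncomputable def cdfQuantile (ν : Measure ℝ) (c : ℝ) : ℝ := sInf {t | c ≤ cdf ν t}

variable {ν : Measure ℝ} {c : ℝ}

lemma bddBelow_setOf_le_cdf (hc : 0 < c) : BddBelow {t | c ≤ cdf ν t} := by
  obtain ⟨a, ha⟩ := ((tendsto_cdf_atBot ν).eventually (gt_mem_nhds hc)).exists
  exact ⟨a, fun t ht => le_of_not_gt fun hta => (ht.trans (monotone_cdf ν hta.le)).not_gt ha⟩

lemma nonempty_setOf_le_cdf (hc : c < 1) : {t | c ≤ cdf ν t}.Nonempty :=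
  ((tendsto_cdf_atTop ν).eventually (lt_mem_nhds hc)).exists.imp fun _ => le_of_lt

lemma le_cdf_cdfQuantile (hc₀ : 0 < c) (hc₁ : c < 1) : c ≤ cdf ν (cdfQuantile ν c) := by
  refine ge_of_tendsto (((cdf ν).right_continuous' _).mono Ioi_subset_Ici_self).tendsto
    (eventually_nhdsWithin_of_forall fun t ht => ?_)
  obtain ⟨t', ht', ht't⟩ := (csInf_lt_iff (bddBelow_setOf_le_cdf hc₀)
    (nonempty_setOf_le_cdf hc₁)).mp ht
  exact ht'.trans (monotone_cdf ν ht't.le)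

lemma cdf_lt_of_lt_cdfQuantile (hc₀ : 0 < c) {t : ℝ} (ht : t < cdfQuantile ν c) : cdf ν t < c :=
  lt_of_not_ge fun h => ht.not_ge (csInf_le (bddBelow_setOf_le_cdf hc₀) h)

lemma measureReal_Iio_cdfQuantile_le [IsProbabilityMeasure ν] (hc₀ : 0 < c) :
    ν.real (Iio (cdfQuantile ν c)) ≤ c := by
  have hleft : Function.leftLim (cdf ν) (cdfQuantile ν c) ≤ c :=
    le_of_tendsto ((monotone_cdf ν).tendsto_leftLim _)
      (eventually_nhdsWithin_of_forall fun t ht => (cdf_lt_of_lt_cdfQuantile hc₀ ht).le)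
  have hIio := (cdf ν).measure_Iio (tendsto_cdf_atBot ν) (cdfQuantile ν c)
  rw [measure_cdf, sub_zero] at hIio
  rw [measureReal_def, hIio]
  exact ENNReal.toReal_le_of_le_ofReal hc₀.le (ENNReal.ofReal_le_ofReal hleft)

end ProbabilityTheory

namespace MeasureTheory.Measure

variable {ι β : Type*} [Fintype ι] [MeasurableSpace β]

noncomputable def empirical (x : ι → β) : Measure β :=
  (Fintype.card ι : ℝ≥0∞)⁻¹ • ∑ i, dirac (x i)

lemma empirical_apply (x : ι → β) {A : Set β} [DecidablePred (· ∈ A)] (hA : MeasurableSet A) :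
    empirical x A = #{i | x i ∈ A} / Fintype.card ι := by
  simp [empirical, dirac_apply' _ hA, Set.indicator_apply, Finset.sum_boole, ENNReal.div_eq_inv_mul]

lemma empirical_real_apply (x : ι → β) {A : Set β} [DecidablePred (· ∈ A)]
    (hA : MeasurableSet A) :
    (empirical x).real A = #{i | x i ∈ A} / Fintype.card ι := by
  simp [measureReal_def, empirical_apply x hA, ENNReal.toReal_div]

instance [Nonempty ι] (x : ι → β) : IsProbabilityMeasure (empirical x) :=
  ⟨by classical simp [empirical_apply x MeasurableSet.univ, ENNReal.div_self]⟩

end MeasureTheory.Measure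

section EmpiricalQuantile

variable {n : ℕ} [NeZero n] {α : ℝ}

lemma empQuant_eq_cdfQuantile (S : Fin n → ℝ) :
    empQuant α S = cdfQuantile (Measure.empirical S) (1 - α) := by
  simp only [empQuant, cdfQuantile, cdf_eq_real, Measure.empirical_real_apply S measurableSet_Iic,
    mem_Iic, Fintype.card_fin]

lemma mul_one_sub_le_card_le_empQuant (hα : α ∈ Ioo 0 1) (S : Fin n → ℝ) :
    n * (1 - α) ≤ #{i | S i ≤ empQuant α S} := by
  have h := le_cdf_cdfQuantile (ν := Measure.empirical S) (sub_pos.2 hα.2) (by linarith [hα.1])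
  rw [← empQuant_eq_cdfQuantile, cdf_eq_real, Measure.empirical_real_apply S measurableSet_Iic,
    le_div_iff₀ (by simp [Nat.pos_of_neZero])] at h
  simpa [mul_comm] using h

lemma card_le_empQuant_le_mul_one_sub_add_one (hα : α ∈ Ioo 0 1) {S : Fin n → ℝ}
    (hS : Function.Injective S) :
    #{i | S i ≤ empQuant α S} ≤ n * (1 - α) + 1 := by
  have h := measureReal_Iio_cdfQuantile_le (ν := Measure.empirical S) (sub_pos.2 hα.2)
  rw [← empQuant_eq_cdfQuantile, Measure.empirical_real_apply S measurableSet_Iio,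
    div_le_iff₀ (by simp [Nat.pos_of_neZero])] at h
  set τ := empQuant α S
  have hatom : #(({i | S i ≤ τ} : Finset _) \ ({i | S i < τ} : Finset _)) ≤ 1 :=
    Finset.card_le_one.mpr fun i hi j hj => by
      simp only [Finset.mem_sdiff, Finset.mem_filter, Finset.mem_univ, true_and, not_lt] at hi hj
      exact hS ((hi.1.antisymm hi.2).trans (hj.1.antisymm hj.2).symm)
  calc (#{i | S i ≤ τ} : ℝ)
      ≤ #(({i | S i ≤ τ} : Finset _) \ ({i | S i < τ} : Finset _)) + #{i | S i < τ} := by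
        exact_mod_cast Finset.card_le_card_sdiff_add_card
    _ ≤ 1 + n * (1 - α) := by
        gcongr
        · exact_mod_cast hatom
        · simpa [mul_comm] using h
    _ = n * (1 - α) + 1 := add_comm _ _

end EmpiricalQuantile

lemma measureReal_le_card_mem_le_exp {Ω : Type*} [MeasurableSpace Ω] (ν : Measure Ω)
    [IsProbabilityMeasure ν] {E : Set Ω} [DecidablePred (· ∈ E)] (hE : MeasurableSet E)
    (n : ℕ) {γ : ℝ} (hγ : 0 ≤ γ) :
    (Measure.pi fun _ : Fin n => ν).real {x | n * (ν.real E + γ) ≤ #{i | x i ∈ E}}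
      ≤ Real.exp (-2 * n * γ ^ 2) := by
  set μ := Measure.pi fun _ : Fin n => ν
  have hY : Measurable (E.indicator (1 : Ω → ℝ)) := measurable_one.indicator hE
  have hmean (i : Fin n) : μ[fun x => E.indicator (1 : Ω → ℝ) (x i)] = ν.real E := by
    rw [integral_comp_eval hY.aestronglyMeasurable, integral_indicator_one hE]
  have hsubG (i : Fin n) :
      HasSubgaussianMGF (fun x => E.indicator 1 (x i) - ν.real E) ((‖(1 : ℝ) - 0‖₊ / 2) ^ 2) μ := by
    rw [← hmean i]
    exact hasSubgaussianMGF_of_mem_Icc (X := fun x : Fin n → Ω => E.indicator (1 : Ω → ℝ) (x i))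
      (hY.comp (measurable_pi_apply i)).aemeasurable
      (ae_of_all _ fun x => ⟨Set.indicator_nonneg (fun _ _ => zero_le_one) _,
        Set.indicator_le_self' (fun _ _ => zero_le_one) _⟩)
  have hindep : iIndepFun (fun i (x : Fin n → Ω) => E.indicator 1 (x i) - ν.real E) μ :=
    iIndepFun_pi (X := fun _ ω => E.indicator 1 ω - ν.real E)
      fun _ => (hY.sub_const _).aemeasurable
  have hoeffding := HasSubgaussianMGF.measure_sum_ge_le_of_iIndepFun hindep (s := Finset.univ)
    (fun i _ => hsubG i) (ε := n * γ) (by positivity)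
  have hsum (x : Fin n → Ω) :
      ∑ i, (E.indicator (1 : Ω → ℝ) (x i) - ν.real E) = #{i | x i ∈ E} - n * ν.real E := by
    simp [Finset.sum_sub_distrib, Set.indicator_apply, Finset.sum_boole]
  have hvariance : ((∑ _i : Fin n, (‖(1 : ℝ) - 0‖₊ / 2) ^ 2 : NNReal) : ℝ) = n / 4 := by
    norm_num [div_pow]
    ring
  have hexponent : -(n * γ) ^ 2 / (2 * (n / 4)) = -2 * n * γ ^ 2 := by
    rcases eq_or_ne (n : ℝ) 0 with hn | hn
    · simp [hn]
    · field_simp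
      ring
  calc μ.real {x | n * (ν.real E + γ) ≤ #{i | x i ∈ E}}
      ≤ μ.real {x | n * γ ≤ ∑ i, (E.indicator (1 : Ω → ℝ) (x i) - ν.real E)} :=
        measureReal_mono fun x hx => by simp only [mem_ofPred_eq, hsum] at hx ⊢; linarith
    _ ≤ _ := hoeffding
    _ = Real.exp (-2 * n * γ ^ 2) := by rw [hvariance, hexponent]

lemma nullSingletonClass_of_ae_injective {ι β : Type*} [Fintype ι] [Nontrivial ι]
    [MeasurableSpace β] {ν : Measure β} [IsProbabilityMeasure ν]
    (h : ∀ᵐ x ∂(Measure.pi fun _ : ι => ν), Function.Injective x) : NullSingletonClass ν := by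
  classical
  obtain ⟨i, j, hij⟩ := exists_pair_ne ι
  refine ⟨fun b => ?_⟩
  set B : ι → Set β := fun k => if k = i ∨ k = j then {b} else univ
  have hnull : Measure.pi (fun _ : ι => ν) (univ.pi B) = 0 := by
    refine measure_mono_null (fun x hx => ?_) (ae_iff.mp h)
    have hk (k : ι) (hk : k = i ∨ k = j) : x k = b := by simpa [B, hk] using hx k (mem_univ k)
    exact fun hinj => hij (hinj ((hk i (.inl rfl)).trans (hk j (.inr rfl)).symm))
  rw [Measure.pi_pi, Finset.prod_eq_zero_iff] at hnull
  obtain ⟨k, -, hk⟩ := hnull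
  by_cases hkij : k = i ∨ k = j <;> simp_all [B]

section Tails

variable {ν : Measure ℝ} [IsProbabilityMeasure ν] {n : ℕ} [NeZero n] {α γ : ℝ}

lemma measureReal_cdf_empQuant_lt_le (hα : α ∈ Ioo 0 1) (hγ : 0 ≤ γ) :
    (Measure.pi fun _ : Fin n => ν).real {S | cdf ν (empQuant α S) < 1 - α - γ}
      ≤ Real.exp (-2 * n * γ ^ 2) := by
  rcases le_or_gt (1 - α - γ) 0 with hc₀ | hc₀
  · have hempty : {S : Fin n → ℝ | cdf ν (empQuant α S) < 1 - α - γ} = ∅ :=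
      eq_empty_of_forall_notMem fun S hS => (cdf_nonneg ν _).not_gt (lt_of_lt_of_le hS hc₀)
    rw [hempty, measureReal_empty]
    positivity
  have hc₁ : 1 - α - γ < 1 := by linarith [hα.1]
  set q := cdfQuantile ν (1 - α - γ)
  have hE : ν.real (Iio q) ≤ 1 - α - γ := measureReal_Iio_cdfQuantile_le hc₀
  refine (measureReal_mono fun S hS => ?_).trans
    (measureReal_le_card_mem_le_exp ν (E := Iio q) measurableSet_Iio n hγ)
  have hτq : empQuant α S < q := lt_of_not_ge fun h =>
    (lt_of_lt_of_le hS ((le_cdf_cdfQuantile hc₀ hc₁).trans (monotone_cdf ν h))).false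
  calc n * (ν.real (Iio q) + γ) ≤ n * (1 - α) := by gcongr; linarith
    _ ≤ #{i | S i ≤ empQuant α S} := mul_one_sub_le_card_le_empQuant hα S
    _ ≤ #{i | S i ∈ Iio q} := by
        gcongr with i
        exact fun hi => lt_of_le_of_lt hi hτq

lemma measureReal_lt_cdf_empQuant_le (hα : α ∈ Ioo 0 1) (hγ : 0 ≤ γ)
    (hinj : ∀ᵐ S ∂(Measure.pi fun _ : Fin n => ν), Function.Injective S) :
    (Measure.pi fun _ : Fin n => ν).real {S | 1 - α + 1 / n + γ < cdf ν (empQuant α S)}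
      ≤ Real.exp (-2 * n * γ ^ 2) := by
  rcases le_or_gt 1 (1 - α + 1 / n + γ) with hc₁ | hc₁
  · have hempty : {S : Fin n → ℝ | 1 - α + 1 / n + γ < cdf ν (empQuant α S)} = ∅ :=
      eq_empty_of_forall_notMem fun S hS => (cdf_le_one ν _).not_gt (lt_of_le_of_lt hc₁ hS)
    rw [hempty, measureReal_empty]
    positivity
  have hn : (0 : ℝ) < n := by simp [Nat.pos_of_neZero]
  have : Nontrivial (Fin n) := by
    have h : (1 : ℝ) / n < 1 := by linarith [hα.2]
    rw [div_lt_one hn] at h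
    exact Fin.nontrivial_iff_two_le.mpr (by exact_mod_cast h)
  have := nullSingletonClass_of_ae_injective hinj
  have hc₀ : 0 < 1 - α + 1 / n + γ := by linarith [hα.2, one_div_pos.mpr hn]
  set q := cdfQuantile ν (1 - α + 1 / n + γ)
  have hq : cdf ν q ≤ 1 - α + 1 / n + γ := by
    rw [cdf_eq_real, ← measureReal_congr Iio_ae_eq_Iic]
    exact measureReal_Iio_cdfQuantile_le hc₀
  have hE : ν.real (Ioi q) ≤ α - 1 / n - γ := by
    rw [← compl_Iic, probReal_compl_eq_one_sub measurableSet_Iic, ← cdf_eq_real]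
    linarith [le_cdf_cdfQuantile (ν := ν) hc₀ hc₁]
  refine (ENNReal.toReal_mono (by finiteness) (measure_mono_ae ?_)).trans
    (measureReal_le_card_mem_le_exp ν (E := Ioi q) measurableSet_Ioi n hγ)
  filter_upwards [hinj] with S hS hbad
  have hqτ : q < empQuant α S := lt_of_not_ge fun h =>
    (lt_of_lt_of_le hbad ((monotone_cdf ν h).trans hq)).false
  have hcover : (n : ℝ) ≤ #{i | S i ≤ empQuant α S} + #{i | S i ∈ Ioi q} := by
    have hunion : (Finset.univ : Finset (Fin n))
        ⊆ ({i | S i ≤ empQuant α S} : Finset _) ∪ ({i | S i ∈ Ioi q} : Finset _) :=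
      fun i _ => by simpa using (le_or_gt (S i) (empQuant α S)).imp_right hqτ.trans
    have := (Finset.card_le_card hunion).trans (Finset.card_union_le _ _)
    simp only [Finset.card_univ, Fintype.card_fin] at this
    exact_mod_cast this
  calc n * (ν.real (Ioi q) + γ) ≤ n * (α - 1 / n) := by gcongr; linarith
    _ = n * α - 1 := by field_simp
    _ ≤ #{i | S i ∈ Ioi q} := by linarith [card_le_empQuant_le_mul_one_sub_add_one hα hS]

lemma measureReal_cdf_empQuant_notMem_Icc_le (hα : α ∈ Ioo 0 1) (hγ : 0 ≤ γ)
    (hinj : ∀ᵐ S ∂(Measure.pi fun _ : Fin n => ν), Function.Injective S) :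
    (Measure.pi fun _ : Fin n => ν).real
        {S | cdf ν (empQuant α S) ∉ Icc (1 - α - γ) (1 - α + 1 / n + γ)}
      ≤ 2 * Real.exp (-2 * n * γ ^ 2) :=
  calc _ ≤ (Measure.pi fun _ : Fin n => ν).real ({S | cdf ν (empQuant α S) < 1 - α - γ} ∪
          {S | 1 - α + 1 / n + γ < cdf ν (empQuant α S)}) :=
        measureReal_mono fun S hS => by
          simpa only [mem_union, mem_ofPred_eq, mem_Icc, not_and_or, not_le] using hS
    _ ≤ _ := (measureReal_union_le _ _).trans (add_le_add
          (measureReal_cdf_empQuant_lt_le hα hγ) (measureReal_lt_cdf_empQuant_le hα hγ hinj))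
    _ = _ := (two_mul _).symm

end Tails

lemma one_sub_measureReal_compl_le {Ω : Type*} [MeasurableSpace Ω] (μ : Measure Ω)
    [IsProbabilityMeasure μ] (A : Set Ω) : 1 - μ.real Aᶜ ≤ μ.real A := by
  have := measureReal_union_le (μ := μ) A Aᶜ
  rw [union_compl_self, probReal_univ] at this
  linarith

/-- Corollary: distinct scores: if the scores `S_i = s(X_i, Y_i)` are
distinct with probability 1, then for any `γ > 0`, with probability at least
`1 - 2 exp(-2 n γ²)` over the sample, the sample-conditional coverage `F(τ̂_n)` satisfies
`1 - α - γ ≤ F(τ̂_n) ≤ 1 - α + 1/n + γ`. -/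
theorem statement_1
    {𝒳 𝒴 : Type*} [MeasurableSpace 𝒳] [MeasurableSpace 𝒴]
    (P : Measure (𝒳 × 𝒴)) [IsProbabilityMeasure P]
    (s : 𝒳 × 𝒴 → ℝ) (hs : Measurable s)
    (n : ℕ) (hn : 0 < n)
    (α : ℝ) (hα : α ∈ Set.Ioo (0 : ℝ) 1)
    (γ : ℝ) (hγ : 0 < γ)
    (F : ℝ → ℝ) (hF : ∀ t, F t = (P {p | s p ≤ t}).toReal)
    (hdistinct :
      (Measure.pi fun _ : Fin n => P) {ω | ∃ i j, i ≠ j ∧ s (ω i) = s (ω j)} = 0) :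
    1 - 2 * Real.exp (-2 * n * γ ^ 2) ≤
      ((Measure.pi fun _ : Fin n => P)
        {ω | 1 - α - γ ≤ F (empQuant α fun i => s (ω i)) ∧
             F (empQuant α fun i => s (ω i)) ≤ 1 - α + 1 / n + γ}).toReal := by
  have : NeZero n := ⟨hn.ne'⟩
  have : IsProbabilityMeasure (P.map s) := Measure.isProbabilityMeasure_map hs.aemeasurable
  obtain rfl : F = cdf (P.map s) := funext fun t => by
    rw [hF, cdf_eq_real, map_measureReal_apply hs measurableSet_Iic]; rfl
  set f : (Fin n → 𝒳 × 𝒴) → Fin n → ℝ := fun ω i => s (ω i)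
  have hf : Measurable f := measurable_pi_lambda _ fun i => hs.comp (measurable_pi_apply i)
  have hmap : (Measure.pi fun _ : Fin n => P).map f = Measure.pi fun _ : Fin n => P.map s :=
    Measure.pi_map_pi fun _ => hs.aemeasurable
  have hinj : ∀ᵐ S ∂(Measure.pi fun _ : Fin n => P.map s), Function.Injective S := by
    have hD : MeasurableSet {S : Fin n → ℝ | ∃ i j, i ≠ j ∧ S i = S j} := by measurability
    refine measure_mono_null (fun S hS => ?_) (hmap ▸ (Measure.map_apply hf hD).trans hdistinct)
    obtain ⟨i, j, hij, hne⟩ : ∃ i j, S i = S j ∧ ¬i = j := by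
      simpa [Function.Injective] using hS
    exact ⟨i, j, hne, hij⟩
  calc 1 - 2 * Real.exp (-2 * n * γ ^ 2)
      ≤ 1 - (Measure.pi fun _ : Fin n => P).real (f ⁻¹'
          {S | cdf (P.map s) (empQuant α S) ∉ Icc (1 - α - γ) (1 - α + 1 / n + γ)}) := by
        gcongr
        refine (ENNReal.toReal_mono (by finiteness)
          (Measure.le_map_apply hf.aemeasurable _)).trans ?_
        exact hmap ▸ measureReal_cdf_empQuant_notMem_Icc_le hα hγ.le hinj
    _ ≤ _ := one_sub_measureReal_compl_le _ _
end

section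
/- Let δ ∈ (0,1) and define γ_n(δ) = (4 log(1/δ))/(3n) + sqrt( ((4/(3n)) log(1/δ))² + (2α(1−α)/n) log(1/δ) ). Then with probability at least 1 − δ over the draw of the sample, 1 − α − γ_n(δ) ≤ P(Y_{n+1} ∈ Ĉ_n(X_{n+1}) | P_n). If additionally the score S = s(X, Y) has a density with respect to Lebesgue measure, then with probability at least 1 − 2δ, 1 − α − γ_n(δ) ≤ P(Y_{n+1} ∈ Ĉ_n(X_{n+1}) | P_n) ≤ 1 − α + γ_n(δ). -/
open MeasureTheory

/-!
Let `F` be the CDF of the score and `τ̂` the empirical quantile. If `F τ̂ < 1 - α - γ`, every score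
`S_i ≤ τ̂` lies in `A = {F < 1 - α - γ}`, so at least `(1 - α) n` of the `n` i.i.d. samples fall in
`A`; and `P(A) ≤ 1 - α - γ` because `F(S)` stochastically dominates the uniform law. Bernstein's
inequality for this binomial count, whose variance proxy is `α(1 - α)`, bounds the probability of
that by `δ` precisely when `γ` solves `γ² = 2 (log(1/δ) / n) (α(1 - α) + 4γ/3)`, i.e. `γ = γ_n(δ)`.
The upper bound is the mirror image: at least `α n` scores satisfy `S_i ≥ τ̂`, and when `S` has no
atoms `P(F(S) > 1 - α + γ) ≤ α - γ`.
-/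

open ProbabilityTheory Real Set Topology

lemma le_of_hasDerivAt_nonpos {f f' : ℝ → ℝ} (hf : ∀ x, HasDerivAt f (f' x) x)
    {a : ℝ} (hf' : ∀ x, a < x → f' x ≤ 0) {t : ℝ} (ht : a ≤ t) : f t ≤ f a :=
  antitoneOn_of_hasDerivWithinAt_nonpos (convex_Ici a)
    (fun x _ => (hf x).continuousAt.continuousWithinAt) (fun x _ => (hf x).hasDerivWithinAt)
    (fun x hx => hf' x (by rwa [interior_Ici] at hx)) self_mem_Ici ht ht

lemma one_sub_mul_exp_le_one (t : ℝ) : (1 - t) * exp t ≤ 1 := by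
  have := mul_le_mul_of_nonneg_right (add_one_le_exp (-t)) (exp_pos t).le
  rwa [← exp_add, neg_add_cancel, exp_zero, neg_add_eq_sub] at this

lemma exp_sub_one_sub_mul_le_sq {t : ℝ} (ht : 0 ≤ t) :
    (exp t - 1 - t) * (2 - 2 / 3 * t) ≤ t ^ 2 := by
  set g : ℝ → ℝ := fun t => (4 / 3 - 2 / 3 * t) * exp t - 4 / 3 - 2 / 3 * t
  have hg : ∀ x, HasDerivAt g ((2 / 3 - 2 / 3 * x) * exp x - 2 / 3) x := fun x =>
    ((((hasDerivAt_id' x).const_mul (2 / 3)).const_sub (4 / 3)).mul (hasDerivAt_exp x)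
      |>.sub_const (4 / 3) |>.sub ((hasDerivAt_id' x).const_mul (2 / 3))).congr_deriv (by ring)
  have hg_nonpos : ∀ x, 0 ≤ x → g x ≤ 0 := fun x hx =>
    (le_of_hasDerivAt_nonpos hg (fun y _ => by linarith [one_sub_mul_exp_le_one y]) hx).trans_eq
      (by simp [g])
  set f : ℝ → ℝ := fun t => (exp t - 1 - t) * (2 - 2 / 3 * t) - t ^ 2
  have hf : ∀ x, HasDerivAt f (g x) x := fun x =>
    ((((hasDerivAt_exp x).sub_const 1).sub (hasDerivAt_id' x)).mul
      (((hasDerivAt_id' x).const_mul (2 / 3)).const_sub 2) |>.sub (hasDerivAt_pow 2 x)).congr_deriv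
      (by simp only [g, Pi.sub_apply]; ring)
  have := le_of_hasDerivAt_nonpos hf (fun y hy => hg_nonpos y hy.le) ht
  simp [f] at this
  linarith

lemma one_add_mul_exp_sub_one_le {p l : ℝ} (hp1 : p ≤ 1) (hl : 0 ≤ l) :
    1 + p * (exp l - 1) ≤ exp (l * p + p * (1 - p) * (exp l - 1 - l)) := by
  set w : ℝ → ℝ := fun t => -(t * p + p * (1 - p) * (exp t - 1 - t))
  set φ : ℝ → ℝ := fun t => (1 + p * (exp t - 1)) * exp (w t)
  have hφ : ∀ x, HasDerivAt φ (-(p ^ 2 * (1 - p) * (exp x - 1) ^ 2) * exp (w x)) x := fun x => by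
    have hw : HasDerivAt w (-(p + p * (1 - p) * (exp x - 1))) x :=
      (((hasDerivAt_id' x).mul_const p).add
        ((((hasDerivAt_exp x).sub_const 1).sub (hasDerivAt_id' x)).const_mul (p * (1 - p)))).neg
        |>.congr_deriv (by ring)
    exact ((((hasDerivAt_exp x).sub_const 1).const_mul p).const_add 1).mul hw.exp
      |>.congr_deriv (by ring)
  have hφl : φ l ≤ φ 0 := le_of_hasDerivAt_nonpos hφ (fun y _ => by
    have : 0 ≤ p ^ 2 * (1 - p) * (exp y - 1) ^ 2 := by
      have : 0 ≤ 1 - p := by linarith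
      positivity
    nlinarith [exp_pos (w y)]) hl
  simp only [φ, w, exp_zero, sub_self, mul_zero, zero_mul, add_zero, neg_zero, mul_one] at hφl
  rwa [exp_neg, ← div_eq_mul_inv, div_le_one (exp_pos _)] at hφl

lemma one_add_mul_exp_sub_one_le_of_sq_eq {q a γ K : ℝ} (hq : 0 ≤ q) (hqa : q ≤ a - γ)
    (ha : a ≤ 1) (hγ : 0 < γ) (hγK : γ ^ 2 = 2 * K * (a * (1 - a) + 4 * γ / 3)) :
    1 + q * (exp (γ / (a * (1 - a) + 4 * γ / 3)) - 1) ≤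
      exp (γ / (a * (1 - a) + 4 * γ / 3) * a - K) := by
  set W := a * (1 - a) + 4 * γ / 3
  set l := γ / W
  set p := a - γ
  have hW : 0 < W := by
    have : 0 ≤ a * (1 - a) := mul_nonneg (by linarith) (by linarith)
    exact add_pos_of_nonneg_of_pos this (by positivity)
  have hlW : l * W = γ := div_mul_cancel₀ γ hW.ne'
  have hl : 0 ≤ l := div_nonneg hγ.le hW.le
  have hlγ : l * γ = 2 * K := mul_left_cancel₀ hW.ne' (by linear_combination γ * hlW + hγK)
  have hψ : 0 ≤ exp l - 1 - l := by linarith [add_one_le_exp l]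
  -- with `ψ = exp l - 1 - l`: `p(1-p) ≤ W - γ/3`, and `ψ(2 - 2l/3) ≤ l²` times `W/2` is
  -- `ψ(W - γ/3) ≤ lγ/2 = lγ - K`
  have hvar : p * (1 - p) * (exp l - 1 - l) ≤ l * γ - K := by
    have := mul_le_mul_of_nonneg_left (exp_sub_one_sub_mul_le_sq hl) hW.le
    nlinarith [mul_le_mul_of_nonneg_right (show p * (1 - p) ≤ W - γ / 3 by
      simp only [p, W]; nlinarith) hψ]
  calc 1 + q * (exp l - 1) ≤ 1 + p * (exp l - 1) := by
        gcongr
        linarith [add_one_le_exp l]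
    _ ≤ exp (l * p + p * (1 - p) * (exp l - 1 - l)) :=
        one_add_mul_exp_sub_one_le (by linarith) hl
    _ ≤ exp (l * a - K) := exp_le_exp.2 (by nlinarith)

-- the positive root `γ` of `γ ^ 2 = 2 * (L / n) * (v + 4 * γ / 3)`
noncomputable def bernsteinRadius (n : ℕ) (v L : ℝ) : ℝ :=
  4 * L / (3 * n) + √((4 / (3 * n) * L) ^ 2 + 2 * v / n * L)

section BernsteinRadius

variable {n : ℕ} {v L : ℝ}

lemma bernsteinRadius_pos (hn : 0 < n) (hL : 0 < L) : 0 < bernsteinRadius n v L :=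
  add_pos_of_pos_of_nonneg (by positivity) (sqrt_nonneg _)

lemma bernsteinRadius_sq (hv : 0 ≤ v) (hL : 0 ≤ L) :
    bernsteinRadius n v L ^ 2 = 2 * (L / n) * (v + 4 * bernsteinRadius n v L / 3) := by
  have h := sq_sqrt (show 0 ≤ (4 / (3 * n) * L) ^ 2 + 2 * v / n * L by positivity)
  unfold bernsteinRadius
  linear_combination h

end BernsteinRadius

section Bernstein

open scoped Classical

variable {Ω : Type*} [MeasurableSpace Ω] (μ : Measure Ω) [IsProbabilityMeasure μ]

lemma measureReal_pi_le_card_le {A : Set Ω} (hA : MeasurableSet A) (n : ℕ) {l : ℝ} (hl : 0 ≤ l)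
    (c : ℝ) :
    (Measure.pi fun _ : Fin n => μ).real
        {ω | c ≤ ((Finset.univ.filter fun i => ω i ∈ A).card : ℝ)} ≤
      exp (-l * c) * (1 + μ.real A * (exp l - 1)) ^ n := by
  set g : Ω → ℝ := fun x => 1 + A.indicator (fun _ => exp l - 1) x
  have hg : Integrable g μ := (integrable_const 1).add ((integrable_const _).indicator hA)
  have hprod : ∀ ω : Fin n → Ω,
      exp (l * (Finset.univ.filter fun i => ω i ∈ A).card) = ∏ i, g (ω i) := fun ω => by
    rw [Finset.natCast_card_filter, Finset.mul_sum, exp_sum]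
    refine Finset.prod_congr rfl fun i _ => ?_
    by_cases h : ω i ∈ A <;> simp [g, h]
  have hmgf : mgf (fun ω : Fin n → Ω => ((Finset.univ.filter fun i => ω i ∈ A).card : ℝ))
      (Measure.pi fun _ => μ) l = (1 + μ.real A * (exp l - 1)) ^ n := by
    simp_rw [mgf, hprod]
    rw [integral_fintype_prod_eq_pow, Fintype.card_fin, integral_add (integrable_const 1)
      ((integrable_const _).indicator hA), integral_indicator_const _ hA]
    simp [smul_eq_mul]
  rw [← hmgf]
  exact measure_ge_le_exp_mul_mgf c hl
    (by simp_rw [hprod]; exact Integrable.fintype_prod fun _ => hg)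

theorem measureReal_pi_bernstein {A : Set Ω} (hA : MeasurableSet A) {n : ℕ} (hn : 0 < n)
    {a L : ℝ} (ha : a ≤ 1) (hL : 0 < L)
    (hq : μ.real A ≤ a - bernsteinRadius n (a * (1 - a)) L) :
    (Measure.pi fun _ : Fin n => μ).real
        {ω | a * n ≤ ((Finset.univ.filter fun i => ω i ∈ A).card : ℝ)} ≤ exp (-L) := by
  set γ := bernsteinRadius n (a * (1 - a)) L
  have hγ : 0 < γ := bernsteinRadius_pos hn hL
  have hv : 0 ≤ a * (1 - a) := mul_nonneg (by linarith [measureReal_nonneg (μ := μ) (s := A)])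
    (by linarith)
  set l := γ / (a * (1 - a) + 4 * γ / 3)
  have hl : 0 ≤ l := div_nonneg hγ.le (by positivity)
  have hmgf : 1 + μ.real A * (exp l - 1) ≤ exp (l * a - L / n) :=
    one_add_mul_exp_sub_one_le_of_sq_eq measureReal_nonneg hq ha hγ
      (bernsteinRadius_sq hv hL.le)
  calc _ ≤ exp (-l * (a * n)) * (1 + μ.real A * (exp l - 1)) ^ n :=
        measureReal_pi_le_card_le μ hA n hl _
    _ ≤ exp (-l * (a * n)) * exp (l * a - L / n) ^ n := by
        gcongr
        nlinarith [measureReal_nonneg (μ := μ) (s := A), add_one_le_exp l]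
    _ = exp (-L) := by
        rw [← exp_nat_mul, ← exp_add]
        congr 1
        field_simp
        ring

end Bernstein

section OrderTopology

variable {α : Type*} [TopologicalSpace α] [LinearOrder α] [MeasurableSpace α] {ν : Measure α}
  [ν.InnerRegular] {B : Set α} {c : ENNReal}

lemma measure_le_of_forall_measure_Iic_le [ClosedIciTopology α] (hB : MeasurableSet B)
    (h : ∀ x ∈ B, ν (Iic x) ≤ c) : ν B ≤ c := by
  rw [hB.measure_eq_iSup_isCompact]
  refine iSup₂_le fun K hKB => iSup_le fun hK => ?_
  rcases K.eq_empty_or_nonempty with rfl | hne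
  · simp
  obtain ⟨x, hxK, hx⟩ := hK.exists_isGreatest hne
  exact (measure_mono fun y hy => hx hy).trans (h x (hKB hxK))

lemma measure_le_of_forall_measure_Ici_le [ClosedIicTopology α] (hB : MeasurableSet B)
    (h : ∀ x ∈ B, ν (Ici x) ≤ c) : ν B ≤ c := by
  rw [hB.measure_eq_iSup_isCompact]
  refine iSup₂_le fun K hKB => iSup_le fun hK => ?_
  rcases K.eq_empty_or_nonempty with rfl | hne
  · simp
  obtain ⟨x, hxK, hx⟩ := hK.exists_isLeast hne
  exact (measure_mono fun y hy => hx hy).trans (h x (hKB hxK))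

end OrderTopology

section CDF

variable (ν : Measure ℝ) [IsProbabilityMeasure ν]

lemma measure_cdf_lt_le (p : ℝ) : ν {x | cdf ν x < p} ≤ ENNReal.ofReal p :=
  measure_le_of_forall_measure_Iic_le
    (measurableSet_lt (monotone_cdf ν).measurable measurable_const)
    fun x hx => by rw [← ofReal_cdf]; exact ENNReal.ofReal_le_ofReal hx.le

lemma measure_lt_cdf_le [NullSingletonClass ν] (β : ℝ) :
    ν {x | β < cdf ν x} ≤ ENNReal.ofReal (1 - β) :=
  measure_le_of_forall_measure_Ici_le
    (measurableSet_lt measurable_const (monotone_cdf ν).measurable)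
    fun x hx => by
      rw [← compl_Iio, prob_compl_eq_one_sub measurableSet_Iio, measure_congr Iio_ae_eq_Iic,
        ← ofReal_cdf, ← ENNReal.ofReal_one, ← ENNReal.ofReal_sub _ (cdf_nonneg ν x)]
      exact ENNReal.ofReal_le_ofReal (by linarith [show β < cdf ν x from hx])

end CDF

noncomputable def empCDF {n : ℕ} (S : Fin n → ℝ) (t : ℝ) : ℝ :=
  ((Finset.univ.filter fun i => S i ≤ t).card : ℝ) / n

section EmpiricalQuantile

variable {n : ℕ} (S : Fin n → ℝ) {α : ℝ}

lemma upperSemicontinuous_empCDF : UpperSemicontinuous (empCDF S) := by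
  have h : UpperSemicontinuous fun t => ∑ i, (Ici (S i)).indicator (fun _ => (1 : ℝ)) t :=
    upperSemicontinuous_sum fun i _ => isClosed_Ici.upperSemicontinuous_indicator zero_le_one
  have heq : empCDF S = (· / (n : ℝ)) ∘ fun t => ∑ i, (Ici (S i)).indicator (fun _ => 1) t := by
    ext t
    simp only [empCDF, Finset.natCast_card_filter, indicator_apply, mem_Ici, Function.comp_apply]
  rw [heq]
  exact (continuous_id.div_const _).comp_upperSemicontinuous h
    fun _ _ h => div_le_div_of_nonneg_right h n.cast_nonneg

lemma lowerSemicontinuous_card_lt :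
    LowerSemicontinuous fun t => ((Finset.univ.filter fun i => S i < t).card : ℝ) := by
  have h : LowerSemicontinuous fun t => ∑ i, (Ioi (S i)).indicator (fun _ => (1 : ℝ)) t :=
    lowerSemicontinuous_sum fun i _ => isOpen_Ioi.lowerSemicontinuous_indicator zero_le_one
  convert h using 1
  ext t
  simp only [Finset.natCast_card_filter, indicator_apply, mem_Ioi]

lemma bddBelow_setOf_le_empCDF (hα : α < 1) : BddBelow {t | 1 - α ≤ empCDF S t} := by
  obtain ⟨m, hm⟩ := (finite_range S).bddBelow
  refine ⟨m, fun t ht => not_lt.1 fun htm => ?_⟩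
  have : empCDF S t = 0 := by
    rw [empCDF, Finset.filter_false_of_mem fun i _ => not_le.2 (htm.trans_le (hm ⟨i, rfl⟩))]
    simp
  linarith [show 1 - α ≤ empCDF S t from ht]

lemma one_sub_le_empCDF_empQuant (hn : 0 < n) (hα0 : 0 ≤ α) (hα1 : α < 1) :
    1 - α ≤ empCDF S (empQuant α S) := by
  obtain ⟨M, hM⟩ := (finite_range S).bddAbove
  have hM1 : empCDF S M = 1 := by
    rw [empCDF, Finset.filter_true_of_mem fun i _ => hM ⟨i, rfl⟩]
    simp [hn.ne']
  exact (upperSemicontinuous_empCDF S).isClosed_preimage (1 - α) |>.csInf_mem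
    ⟨M, show 1 - α ≤ empCDF S M by linarith⟩ (bddBelow_setOf_le_empCDF S hα1)

lemma one_sub_mul_le_card_le_empQuant (hn : 0 < n) (hα0 : 0 ≤ α) (hα1 : α < 1) :
    (1 - α) * n ≤ ((Finset.univ.filter fun i => S i ≤ empQuant α S).card : ℝ) := by
  have := one_sub_le_empCDF_empQuant S hn hα0 hα1
  rwa [empCDF, le_div_iff₀ (by exact_mod_cast hn)] at this

lemma mul_le_card_empQuant_le (hn : 0 < n) (hα : α < 1) :
    α * n ≤ ((Finset.univ.filter fun i => empQuant α S ≤ S i).card : ℝ) := by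
  set τ := empQuant α S
  -- the samples strictly below `τ` are at most a `1 - α` fraction, since any `t < τ` has
  -- `empCDF S t < 1 - α`, and `#{i | S i < t}` is lower semicontinuous
  have hbelow : ((Finset.univ.filter fun i => S i < τ).card : ℝ) ≤ (1 - α) * n := by
    by_contra! h
    have hU : _ ∈ 𝓝[<] τ := mem_nhdsWithin_of_mem_nhds
      ((lowerSemicontinuous_card_lt S).isOpen_preimage _ |>.mem_nhds h)
    obtain ⟨t, ht, htτ⟩ := Filter.nonempty_of_mem (Filter.inter_mem hU self_mem_nhdsWithin)
    refine (csInf_le (bddBelow_setOf_le_empCDF S hα) (?_ : 1 - α ≤ empCDF S t)).not_gt htτ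
    have hle : (Finset.univ.filter fun i => S i < t).card ≤
        (Finset.univ.filter fun i => S i ≤ t).card :=
      Finset.card_le_card (Finset.monotone_filter_right _ fun _ _ => le_of_lt)
    rw [empCDF, le_div_iff₀ (by exact_mod_cast hn)]
    exact (show (1 - α) * n < _ from ht).le.trans (Nat.cast_le.2 hle)
  have hsplit : ((Finset.univ.filter fun i => S i < τ).card : ℝ) +
      (Finset.univ.filter fun i => τ ≤ S i).card = n := by
    have := Finset.card_filter_add_card_filter_not (s := Finset.univ) fun i => S i < τ
    simp only [not_lt, Finset.card_univ, Fintype.card_fin] at this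
    exact_mod_cast this
  linarith
end EmpiricalQuantile

lemma one_sub_le_measureReal_of_compl_le {Ω : Type*} [MeasurableSpace Ω] {μ : Measure Ω}
    [IsProbabilityMeasure μ] {E : Set Ω} {δ : ℝ} (h : μ.real Eᶜ ≤ δ) : 1 - δ ≤ μ.real E := by
  have := measureReal_union_le (μ := μ) E Eᶜ
  rw [union_compl_self, probReal_univ] at this
  linarith

section Tails

open scoped Classical

variable {Ω : Type*} [MeasurableSpace Ω] {μ : Measure Ω} [IsProbabilityMeasure μ]
  {s : Ω → ℝ} {n : ℕ} {α L : ℝ}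

lemma measureReal_pi_cdf_empQuant_lt_le (hs : Measurable s) (hn : 0 < n) (hα0 : 0 ≤ α)
    (hα1 : α < 1) (hL : 0 < L) :
    (Measure.pi fun _ : Fin n => μ).real
        {ω | cdf (μ.map s) (empQuant α fun i => s (ω i)) <
          1 - α - bernsteinRadius n (α * (1 - α)) L} ≤ exp (-L) := by
  have := Measure.isProbabilityMeasure_map (μ := μ) hs.aemeasurable
  set p := 1 - α - bernsteinRadius n (α * (1 - α)) L
  rcases lt_or_ge p 0 with hp | hp
  · have hempty : {ω : Fin n → Ω | cdf (μ.map s) (empQuant α fun i => s (ω i)) < p} = ∅ :=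
      eq_empty_of_forall_notMem fun ω hω => (cdf_nonneg _ _).not_gt (lt_trans hω hp)
    rw [hempty, measureReal_empty]
    exact (exp_pos _).le
  have hB : MeasurableSet {x | cdf (μ.map s) x < p} :=
    measurableSet_lt (monotone_cdf _).measurable measurable_const
  have hA : μ.real (s ⁻¹' {x | cdf (μ.map s) x < p}) ≤
      (1 - α) - bernsteinRadius n ((1 - α) * (1 - (1 - α))) L := by
    rw [show (1 - α) * (1 - (1 - α)) = α * (1 - α) by ring, measureReal_def,
      ← Measure.map_apply hs hB]
    exact ENNReal.toReal_le_of_le_ofReal hp (measure_cdf_lt_le _ p)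
  refine (measureReal_mono fun ω hω => ?_).trans
    (measureReal_pi_bernstein μ (hs hB) hn (by linarith) hL hA)
  refine (one_sub_mul_le_card_le_empQuant (fun i => s (ω i)) hn hα0 hα1).trans (Nat.cast_le.2
    (Finset.card_le_card (Finset.monotone_filter_right _ fun i _ hi => ?_)))
  exact (monotone_cdf _ hi).trans_lt hω

lemma measureReal_pi_lt_cdf_empQuant_le (hs : Measurable s) [NullSingletonClass (μ.map s)]
    (hn : 0 < n) (hα : α < 1) (hL : 0 < L) :
    (Measure.pi fun _ : Fin n => μ).real
        {ω | 1 - α + bernsteinRadius n (α * (1 - α)) L <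
          cdf (μ.map s) (empQuant α fun i => s (ω i))} ≤ exp (-L) := by
  have := Measure.isProbabilityMeasure_map (μ := μ) hs.aemeasurable
  set β := 1 - α + bernsteinRadius n (α * (1 - α)) L
  rcases le_or_gt 1 β with hβ | hβ
  · have hempty : {ω : Fin n → Ω | β < cdf (μ.map s) (empQuant α fun i => s (ω i))} = ∅ :=
      eq_empty_of_forall_notMem fun ω hω => (cdf_le_one _ _).not_gt (lt_of_le_of_lt hβ hω)
    rw [hempty, measureReal_empty]
    exact (exp_pos _).le
  have hB : MeasurableSet {x | β < cdf (μ.map s) x} :=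
    measurableSet_lt measurable_const (monotone_cdf _).measurable
  have hA : μ.real (s ⁻¹' {x | β < cdf (μ.map s) x}) ≤
      α - bernsteinRadius n (α * (1 - α)) L := by
    rw [measureReal_def, ← Measure.map_apply hs hB, show α - _ = 1 - β by ring]
    exact ENNReal.toReal_le_of_le_ofReal (by linarith) (measure_lt_cdf_le _ β)
  refine (measureReal_mono fun ω hω => ?_).trans
    (measureReal_pi_bernstein μ (hs hB) hn hα.le hL hA)
  refine (mul_le_card_empQuant_le (fun i => s (ω i)) hn hα).trans (Nat.cast_le.2
    (Finset.card_le_card (Finset.monotone_filter_right _ fun i _ hi => ?_)))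
  exact lt_of_lt_of_le hω (monotone_cdf _ hi)

end Tails

/-- Proposition 2 of the paper: with
`γ_n(δ) = (4 log(1/δ))/(3n) + sqrt(((4/(3n)) log(1/δ))² + (2α(1-α)/n) log(1/δ))`,
with probability at least `1 - δ` the sample-conditional coverage `F(τ̂_n)` is at least
`1 - α - γ_n(δ)`; and if the score `S = s(X,Y)` has a Lebesgue density, then with
probability at least `1 - 2δ` also `F(τ̂_n) ≤ 1 - α + γ_n(δ)`. -/
theorem statement_2
    {𝒳 𝒴 : Type*} [MeasurableSpace 𝒳] [MeasurableSpace 𝒴]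
    (P : Measure (𝒳 × 𝒴)) [IsProbabilityMeasure P]
    (s : 𝒳 × 𝒴 → ℝ) (hs : Measurable s)
    (n : ℕ) (hn : 0 < n)
    (α : ℝ) (hα : α ∈ Set.Ioo (0 : ℝ) 1)
    (δ : ℝ) (hδ : δ ∈ Set.Ioo (0 : ℝ) 1)
    (γn : ℝ)
    (hγn : γn = 4 * Real.log (1 / δ) / (3 * n) +
      Real.sqrt ((4 / (3 * n) * Real.log (1 / δ)) ^ 2 +
        2 * α * (1 - α) / n * Real.log (1 / δ)))
    (F : ℝ → ℝ) (hF : ∀ t, F t = (P {p | s p ≤ t}).toReal) :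
    (1 - δ ≤
      ((Measure.pi fun _ : Fin n => P)
        {ω | 1 - α - γn ≤ F (empQuant α fun i => s (ω i))}).toReal) ∧
    (P.map s ≪ volume →
      1 - 2 * δ ≤
        ((Measure.pi fun _ : Fin n => P)
          {ω | 1 - α - γn ≤ F (empQuant α fun i => s (ω i)) ∧
               F (empQuant α fun i => s (ω i)) ≤ 1 - α + γn}).toReal) := by
  obtain ⟨hα0, hα1⟩ := hα
  obtain ⟨hδ0, hδ1⟩ := hδ
  have hL : 0 < Real.log (1 / δ) := Real.log_pos (by rw [one_div]; exact (one_lt_inv₀ hδ0).2 hδ1)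
  have hδL : exp (-Real.log (1 / δ)) = δ := by
    rw [one_div, Real.log_inv, neg_neg, Real.exp_log hδ0]
  set L := Real.log (1 / δ)
  have hγ : γn = bernsteinRadius n (α * (1 - α)) L := by rw [hγn, bernsteinRadius, mul_assoc 2 α]
  have := Measure.isProbabilityMeasure_map (μ := P) hs.aemeasurable
  have hFcdf : F = cdf (P.map s) := funext fun t => by
    rw [hF, cdf_eq_real, measureReal_def, Measure.map_apply hs measurableSet_Iic]
    rfl
  subst hγ hFcdf
  have hlow := measureReal_pi_cdf_empQuant_lt_le (μ := P) hs hn hα0.le hα1 hL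
  rw [hδL] at hlow
  refine ⟨one_sub_le_measureReal_of_compl_le (by simpa only [compl_ofPred, not_le] using hlow),
    fun hac => ?_⟩
  have : NullSingletonClass (P.map s) := ⟨fun _ => hac Real.volume_singleton⟩
  have hup := measureReal_pi_lt_cdf_empQuant_le (μ := P) hs hn hα1 hL
  rw [hδL] at hup
  refine one_sub_le_measureReal_of_compl_le <| (measureReal_mono fun ω hω => ?_).trans <|
    (measureReal_union_le _ _).trans <| (add_le_add hlow hup).trans_eq (two_mul δ).symm
  exact (not_and_or.1 hω).imp not_le.1 not_le.1
end

section
/- Let θ̂ minimize θ ↦ Σ_{i=1}^n ℓ_α(⟨θ, φ(X_i)⟩ − S_i) over ℝ^d and set ĥ(x) = ⟨θ̂, φ(x)⟩. Then for every u ∈ ℝ^d such that ⟨u, φ(x)⟩ ≥ 0 for all x ∈ 𝒳, (1/n) Σ_{i=1}^n ⟨φ(X_i), u⟩ · 1{S_i > ĥ(X_i)} ≤ α · (1/n) Σ_{i=1}^n ⟨φ(X_i), u⟩. -/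
/-!
Perturb the minimizer in the direction `u`. Since the pinball loss is piecewise linear with its
only kink at `0`, for small `ε > 0` the residual `t i = ĥ(X i) - S i` moves to `t i + ε a i`
(with `a i = ⟨u, φ(X i)⟩ ≥ 0`) without any negative residual crossing `0`, so the loss changes
by exactly `ε ∑ a i (α - 1{t i < 0})`. Minimality makes this nonnegative.
-/

noncomputable def pinball (α t : ℝ) : ℝ := α * max t 0 + (1 - α) * max (-t) 0

open Filter Topology

lemma pinball_eq_mul_add_max (α t : ℝ) : pinball α t = α * t + max (-t) 0 := by
  rcases le_total t 0 with ht | ht <;>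
    (simp only [pinball, max_eq_left, max_eq_right, ht, neg_nonneg, neg_nonpos]; ring)

lemma eventually_pinball_add_mul (α t : ℝ) {a : ℝ} (ha : 0 ≤ a) :
    ∀ᶠ ε in 𝓝[>] 0,
      pinball α (t + ε * a) = pinball α t + ε * (a * (α - if t < 0 then 1 else 0)) := by
  by_cases ht : t < 0
  · have hlim : Tendsto (fun ε : ℝ => t + ε * a) (𝓝[>] 0) (𝓝 t) := by
      have : Continuous fun ε : ℝ => t + ε * a := by fun_prop
      simpa using (this.tendsto 0).mono_left nhdsWithin_le_nhds
    filter_upwards [hlim.eventually (gt_mem_nhds ht)] with ε hε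
    simp only [pinball_eq_mul_add_max, ht, if_true, max_eq_left (neg_nonneg.2 hε.le),
      max_eq_left (neg_nonneg.2 ht.le)]
    ring
  · push Not at ht
    filter_upwards [self_mem_nhdsWithin] with ε (hε : 0 < ε)
    have hsum : 0 ≤ t + ε * a := by positivity
    simp only [pinball_eq_mul_add_max, not_lt.2 ht, if_false, max_eq_right (neg_nonpos.2 hsum),
      max_eq_right (neg_nonpos.2 ht)]
    ring

lemma sum_mul_ite_neg_le_of_forall_pinball_le {ι : Type*} (s : Finset ι) (α : ℝ) (t a : ι → ℝ)
    (ha : ∀ i ∈ s, 0 ≤ a i)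
    (hmin : ∀ ε > 0, ∑ i ∈ s, pinball α (t i) ≤ ∑ i ∈ s, pinball α (t i + ε * a i)) :
    ∑ i ∈ s, a i * (if t i < 0 then 1 else 0) ≤ α * ∑ i ∈ s, a i := by
  have hev : ∀ᶠ ε in 𝓝[>] (0 : ℝ), ∀ i ∈ s,
      pinball α (t i + ε * a i) = pinball α (t i) + ε * (a i * (α - if t i < 0 then 1 else 0)) :=
    (eventually_all_finset s).2 fun i hi => eventually_pinball_add_mul α (t i) (ha i hi)
  obtain ⟨ε, hε, hεpos⟩ := (hev.and self_mem_nhdsWithin).exists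
  have hε0 : (0 : ℝ) < ε := hεpos
  have hslope : 0 ≤ ∑ i ∈ s, a i * (α - if t i < 0 then 1 else 0) := by
    have := hmin ε hε0
    rw [Finset.sum_congr rfl hε, Finset.sum_add_distrib, ← Finset.mul_sum] at this
    exact nonneg_of_mul_nonneg_right (by linarith) hε0
  simp only [mul_sub, Finset.sum_sub_distrib, mul_comm _ α, ← Finset.mul_sum] at hslope
  linarith

theorem statement_10_general
    {𝒳 : Type*} (n d : ℕ)
    (α : ℝ)
    (φ : 𝒳 → EuclideanSpace ℝ (Fin d))
    (X : Fin n → 𝒳) (S : Fin n → ℝ)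
    (θh : EuclideanSpace ℝ (Fin d))
    (hmin : ∀ θ : EuclideanSpace ℝ (Fin d),
      ∑ i, pinball α ((inner ℝ θh (φ (X i)) : ℝ) - S i) ≤
        ∑ i, pinball α ((inner ℝ θ (φ (X i)) : ℝ) - S i)) :
    ∀ u : EuclideanSpace ℝ (Fin d), (∀ x, 0 ≤ (inner ℝ u (φ x) : ℝ)) →
      (1 / n : ℝ) * ∑ i, (inner ℝ u (φ (X i)) : ℝ) *
          (if (inner ℝ θh (φ (X i)) : ℝ) < S i then 1 else 0) ≤
        α * ((1 / n : ℝ) * ∑ i, (inner ℝ u (φ (X i)) : ℝ)) := by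
  intro u hu
  have hperturb : ∀ ε > 0, ∑ i, pinball α ((inner ℝ θh (φ (X i)) : ℝ) - S i) ≤
      ∑ i, pinball α ((inner ℝ θh (φ (X i)) : ℝ) - S i + ε * inner ℝ u (φ (X i))) := by
    intro ε _
    convert hmin (θh + ε • u) using 4
    rw [inner_add_left, real_inner_smul_left]
    ring
  have hcover := sum_mul_ite_neg_le_of_forall_pinball_le Finset.univ α _ _
    (fun i _ => hu (X i)) hperturb
  simp only [sub_neg] at hcover
  rw [mul_left_comm]
  exact mul_le_mul_of_nonneg_left hcover (by positivity)

/-- Lemma: one-directional coverage, first part: if `θ̂` minimizes the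
empirical quantile loss and `ĥ(x) = ⟨θ̂, φ(x)⟩`, then for any `u` with `⟨u, φ(x)⟩ ≥ 0` for
all `x`, `(1/n) Σ_i ⟨φ(X_i), u⟩ 1{S_i > ĥ(X_i)} ≤ α (1/n) Σ_i ⟨φ(X_i), u⟩`. -/
theorem statement_10
    {𝒳 : Type*} (n d : ℕ)
    (α : ℝ) (hα : α ∈ Set.Ioo (0 : ℝ) 1)
    (φ : 𝒳 → EuclideanSpace ℝ (Fin d))
    (X : Fin n → 𝒳) (S : Fin n → ℝ)
    (θh : EuclideanSpace ℝ (Fin d))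
    (hmin : ∀ θ : EuclideanSpace ℝ (Fin d),
      ∑ i, pinball α ((inner ℝ θh (φ (X i)) : ℝ) - S i) ≤
        ∑ i, pinball α ((inner ℝ θ (φ (X i)) : ℝ) - S i)) :
    ∀ u : EuclideanSpace ℝ (Fin d), (∀ x, 0 ≤ (inner ℝ u (φ x) : ℝ)) →
      (1 / n : ℝ) * ∑ i, (inner ℝ u (φ (X i)) : ℝ) *
          (if (inner ℝ θh (φ (X i)) : ℝ) < S i then 1 else 0) ≤
        α * ((1 / n : ℝ) * ∑ i, (inner ℝ u (φ (X i)) : ℝ)) :=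
  statement_10_general n d α φ X S θh hmin
end
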